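/- Let f : ℝⁿ → ℝ be twice continuously differentiable with Hessian Lipschitz continuous with constant L (in operator norm), let x, y ∈ ℝⁿ, and suppose ∇²f(x) is invertible. Set z = ∇²f(x)(y − x). If d ∈ ℝⁿ satisfies the Newton-direction interpolating condition zᵀ d = −f(y) + f(x) + ½ (y − x)ᵀ z, then |zᵀ ( −∇²f(x)⁻¹ ∇f(x) − d )| ≤ (L/6) ‖y − x‖³. -/

import Mathlib

/-!
Taylor's theorem with a Lipschitz Hessian bounds the second-order remainder
`f y - f x - ⟪∇f x, y - x⟫ - ½ ⟪∇²f x (y - x), y - x⟫` by `L/6 ‖y - x‖³`. Since the Hessian is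
symmetric, `⟪z, -∇²f(x)⁻¹ ∇f(x)⟫ = -⟪∇f x, y - x⟫`, so the interpolating condition turns
`⟪z, -∇²f(x)⁻¹ ∇f(x) - d⟫` into exactly this remainder.
-/

open scoped RealInnerProductSpace
open InnerProductSpace Set

theorem norm_le_of_norm_deriv_le_mul_pow {F : Type*} [NormedAddCommGroup F] [NormedSpace ℝ F]
    {h h' : ℝ → F} {C : ℝ} (k : ℕ) (h0 : h 0 = 0)
    (hd : ∀ t ∈ Icc (0 : ℝ) 1, HasDerivAt h (h' t) t)
    (hbound : ∀ t ∈ Ico (0 : ℝ) 1, ‖h' t‖ ≤ C * t ^ k) :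
    ‖h 1‖ ≤ C / (k + 1) := by
  have hB : ∀ t : ℝ, HasDerivAt (fun s => C / (k + 1) * s ^ (k + 1)) (C * t ^ k) t := fun t =>
    ((hasDerivAt_pow (k + 1) t).const_mul (C / (k + 1))).congr_deriv (by
      push_cast [Nat.add_sub_cancel]
      field_simp)
  simpa using image_norm_le_of_norm_deriv_right_le_deriv_boundary
    (fun t ht => (hd t ht).continuousAt.continuousWithinAt)
    (fun t ht => (hd t (Ico_subset_Icc_self ht)).hasDerivWithinAt) (by simp [h0]) hB hbound
    (right_mem_Icc.2 zero_le_one)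

section Taylor

variable {E F : Type*} [NormedAddCommGroup E] [NormedSpace ℝ E]
  [NormedAddCommGroup F] [NormedSpace ℝ F]

theorem norm_sub_sub_fderiv_le_of_lipschitz {g : E → F} {g' : E → E →L[ℝ] F} {L : ℝ} {x : E}
    (hg : ∀ u, HasFDerivAt g (g' u) u) (hLip : ∀ u, ‖g' u - g' x‖ ≤ L * ‖u - x‖) (v : E) :
    ‖g (x + v) - g x - g' x v‖ ≤ L / 2 * ‖v‖ ^ 2 := by
  have hd : ∀ t : ℝ, HasDerivAt (fun s : ℝ => g (x + s • v) - g x - s • g' x v)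
      (g' (x + t • v) v - g' x v) t := fun t => by
    have hline : HasDerivAt (fun s : ℝ => x + s • v) v t := by
      simpa using ((hasDerivAt_id t).smul_const v).const_add x
    exact ((((hg _).comp_hasDerivAt t hline).sub_const (g x)).sub
      ((hasDerivAt_id t).smul_const (g' x v))).congr_deriv (by simp)
  have hbound : ∀ t ∈ Ico (0 : ℝ) 1, ‖g' (x + t • v) v - g' x v‖ ≤ L * ‖v‖ ^ 2 * t ^ 1 :=
    fun t ht => calc
      ‖g' (x + t • v) v - g' x v‖ ≤ ‖g' (x + t • v) - g' x‖ * ‖v‖ :=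
        (g' (x + t • v) - g' x).le_opNorm v
      _ ≤ L * (t * ‖v‖) * ‖v‖ := by
        gcongr
        simpa [norm_smul, abs_of_nonneg ht.1] using hLip (x + t • v)
      _ = L * ‖v‖ ^ 2 * t ^ 1 := by ring
  have := norm_le_of_norm_deriv_le_mul_pow 1 (by simp) (fun t _ => hd t) hbound
  norm_num at this
  linarith

end Taylor

section Hessian

variable {E : Type*} [NormedAddCommGroup E] [InnerProductSpace ℝ E] [CompleteSpace E]
  {f : E → ℝ} {g : E → E} {H : E → E →L[ℝ] E}

theorem isSymmetric_of_hasFDerivAt_gradient (hf : ∀ u, HasGradientAt f (g u) u)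
    (hg : ∀ u, HasFDerivAt g (H u) u) (x : E) : (H x : E →ₗ[ℝ] E).IsSymmetric := fun a b => by
  have hdual : HasFDerivAt (fun u => toDual ℝ E (g u))
      ((toDual ℝ E).toContinuousLinearEquiv.toContinuousLinearMap.comp (H x)) x :=
    (toDual ℝ E).toContinuousLinearEquiv.toContinuousLinearMap.hasFDerivAt.comp x (hg x)
  simpa [toDual_apply_apply, real_inner_comm] using
    second_derivative_symmetric (fun u => (hf u).hasFDerivAt) hdual a b

theorem abs_sub_sub_inner_sub_le_of_lipschitz_hessian {L : ℝ} {x : E}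
    (hf : ∀ u, HasGradientAt f (g u) u) (hg : ∀ u, HasFDerivAt g (H u) u)
    (hLip : ∀ u, ‖H u - H x‖ ≤ L * ‖u - x‖) (v : E) :
    |f (x + v) - f x - ⟪g x, v⟫ - 1 / 2 * ⟪H x v, v⟫| ≤ L / 6 * ‖v‖ ^ 3 := by
  have hd : ∀ t : ℝ, HasDerivAt
      (fun s : ℝ => f (x + s • v) - f x - s * ⟪g x, v⟫ - s ^ 2 / 2 * ⟪H x v, v⟫)
      ⟪g (x + t • v) - g x - H x (t • v), v⟫ t := fun t => by
    have hline : HasDerivAt (fun s : ℝ => x + s • v) v t := by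
      simpa using ((hasDerivAt_id t).smul_const v).const_add x
    have hrestrict : HasDerivAt (fun s : ℝ => f (x + s • v)) ⟪g (x + t • v), v⟫ t :=
      (hf _).hasFDerivAt.comp_hasDerivAt t hline
    refine ((((hrestrict.sub_const (f x)).sub ((hasDerivAt_id t).mul_const ⟪g x, v⟫)).sub
      (((hasDerivAt_pow 2 t).div_const 2).mul_const ⟪H x v, v⟫))).congr_deriv ?_
    simp only [map_smul, inner_sub_left, real_inner_smul_left]
    push_cast
    ring
  have hbound : ∀ t ∈ Ico (0 : ℝ) 1,
      ‖⟪g (x + t • v) - g x - H x (t • v), v⟫‖ ≤ L * ‖v‖ ^ 3 / 2 * t ^ 2 := fun t ht => calc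
    ‖⟪g (x + t • v) - g x - H x (t • v), v⟫‖ ≤ ‖g (x + t • v) - g x - H x (t • v)‖ * ‖v‖ :=
      norm_inner_le_norm _ _
    _ ≤ L / 2 * ‖t • v‖ ^ 2 * ‖v‖ := by
      gcongr
      exact norm_sub_sub_fderiv_le_of_lipschitz hg hLip _
    _ = L * ‖v‖ ^ 3 / 2 * t ^ 2 := by
      rw [norm_smul, Real.norm_eq_abs, abs_of_nonneg ht.1]
      ring
  have := norm_le_of_norm_deriv_le_mul_pow 2 (by simp) (fun t _ => hd t) hbound
  norm_num at this
  linarith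

end Hessian

theorem newton_direction_componentwise_error_general
    {n : ℕ} (f : EuclideanSpace ℝ (Fin n) → ℝ)
    (g : EuclideanSpace ℝ (Fin n) → EuclideanSpace ℝ (Fin n))
    (hess : EuclideanSpace ℝ (Fin n) → EuclideanSpace ℝ (Fin n) →L[ℝ] EuclideanSpace ℝ (Fin n))
    (L : ℝ)
    (hg : ∀ u, HasGradientAt f (g u) u)
    (hhess : ∀ u, HasFDerivAt g (hess u) u)
    (hLip : ∀ u v, ‖hess u - hess v‖ ≤ L * ‖u - v‖)
    (x y : EuclideanSpace ℝ (Fin n))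
    -- invertibility of `∇²f(x)`, with inverse `Hinv`:
    (Hinv : EuclideanSpace ℝ (Fin n) →L[ℝ] EuclideanSpace ℝ (Fin n))
    (hinv₂ : ∀ u, hess x (Hinv u) = u)
    (z : EuclideanSpace ℝ (Fin n)) (hz : z = hess x (y - x))
    (d : EuclideanSpace ℝ (Fin n))
    (hd : ⟪z, d⟫ = -f y + f x + (1 / 2) * ⟪y - x, z⟫) :
    |⟪z, -Hinv (g x) - d⟫| ≤ L / 6 * ‖y - x‖ ^ 3 := by
  subst hz
  have hsymm : ⟪hess x (y - x), -Hinv (g x)⟫ = ⟪y - x, hess x (-Hinv (g x))⟫ :=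
    isSymmetric_of_hasFDerivAt_gradient hg hhess x _ _
  have hnewton : ⟪hess x (y - x), -Hinv (g x)⟫ = -⟪g x, y - x⟫ := by
    rw [hsymm, map_neg, hinv₂, inner_neg_right, real_inner_comm]
  have hsplit : ⟪hess x (y - x), -Hinv (g x) - d⟫
      = f (x + (y - x)) - f x - ⟪g x, y - x⟫ - 1 / 2 * ⟪hess x (y - x), y - x⟫ := by
    rw [inner_sub_right, hnewton, hd, add_sub_cancel, real_inner_comm (hess x (y - x)) (y - x)]
    ring
  rw [hsplit]
  exact abs_sub_sub_inner_sub_le_of_lipschitz_hessian hg hhess (fun u => hLip u x) (y - x)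

/-- The componentwise estimate from the proof of Theorem 3.2 of the paper: if `d` satisfies the
Newton-direction interpolating condition at `y` with `z = ∇²f(x)(y − x)`, then the component of
the error to the exact Newton direction along `z` is bounded by `(L/6) ‖y − x‖³`. -/
theorem newton_direction_componentwise_error
    {n : ℕ} (f : EuclideanSpace ℝ (Fin n) → ℝ)
    (g : EuclideanSpace ℝ (Fin n) → EuclideanSpace ℝ (Fin n))
    (hess : EuclideanSpace ℝ (Fin n) → EuclideanSpace ℝ (Fin n) →L[ℝ] EuclideanSpace ℝ (Fin n))
    (L : ℝ)
    (hg : ∀ u, HasGradientAt f (g u) u)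
    (hhess : ∀ u, HasFDerivAt g (hess u) u)
    (hLip : ∀ u v, ‖hess u - hess v‖ ≤ L * ‖u - v‖)
    (x y : EuclideanSpace ℝ (Fin n))
    -- invertibility of `∇²f(x)`, with inverse `Hinv`:
    (Hinv : EuclideanSpace ℝ (Fin n) →L[ℝ] EuclideanSpace ℝ (Fin n))
    (hinv₁ : ∀ u, Hinv (hess x u) = u) (hinv₂ : ∀ u, hess x (Hinv u) = u)
    (z : EuclideanSpace ℝ (Fin n)) (hz : z = hess x (y - x))
    (d : EuclideanSpace ℝ (Fin n))
    (hd : ⟪z, d⟫ = -f y + f x + (1 / 2) * ⟪y - x, z⟫) :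
    |⟪z, -Hinv (g x) - d⟫| ≤ L / 6 * ‖y - x‖ ^ 3 :=
  newton_direction_componentwise_error_general f g hess L hg hhess hLip x y Hinv hinv₂ z hz d hd
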